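/- For fixed Y₀ > 0, the function T ↦ ∫₀^{ℏω_D} tanh(√(ξ²+Y₀)/(2k_B T))/√(ξ²+Y₀) dξ, extended by T = 0 value ∫₀^{ℏω_D} dξ/√(ξ²+Y₀), is continuous at T = 0 and has right derivative 0 there; moreover |F(T,Y₀) − F(0,Y₀)|/T ≤ (4k_B²T/Y₀)∫₀^{ℏω_D} dξ/√(ξ²+Y₀) for T > 0. -/

import Mathlib

/-!
Since `1 - tanh x = 2 / (exp (2x) + 1) ≤ 1 / x²`, the integrands of `F T` and `F 0` differ by at
most `(2 k_B T)² / (ξ² + Y₀)^{3/2} ≤ (4 k_B² T² / Y₀) / √(ξ² + Y₀)`. Hence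
`|F T - F 0| = O(T²)`, which forces continuity and a vanishing right derivative at `T = 0`.
-/

open Real
namespace Real

theorem continuous_tanh : Continuous tanh := by
  simp only [funext tanh_eq_sinh_div_cosh]
  exact continuous_sinh.div continuous_cosh fun x => (cosh_pos x).ne'

theorem one_sub_tanh_eq (x : ℝ) : 1 - tanh x = 2 / (exp (2 * x) + 1) := by
  have h : exp (2 * x) = exp x * exp x := by rw [← exp_add]; ring_nf
  rw [tanh_eq, h, exp_neg]
  field_simp
  ring

theorem one_sub_tanh_le_inv_sq {x : ℝ} (hx : 0 < x) : 1 - tanh x ≤ (x ^ 2)⁻¹ := by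
  have hexp : 1 + 2 * x + (2 * x) ^ 2 / 2 ≤ exp (2 * x) :=
    quadratic_le_exp_of_nonneg (by positivity)
  rw [one_sub_tanh_eq, div_le_iff₀ (by positivity)]
  field_simp
  nlinarith

end Real

theorem abs_tanh_div_div_sub_inv_le {s c Y : ℝ} (hs : 0 < s) (hc : 0 < c) (hY : 0 < Y)
    (hYs : Y ≤ s ^ 2) : |tanh (s / c) / s - 1 / s| ≤ c ^ 2 / Y * (1 / s) := by
  have habs : |tanh (s / c) / s - 1 / s| = (1 - tanh (s / c)) * (1 / s) := by
    rw [← sub_div, abs_div, abs_of_pos hs, abs_of_nonpos (by linarith [tanh_lt_one (s / c)])]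
    ring
  have hinv : ((s / c) ^ 2)⁻¹ ≤ c ^ 2 / Y := by
    rw [div_pow, inv_div]
    gcongr
  rw [habs]
  gcongr
  exact (one_sub_tanh_le_inv_sq (by positivity)).trans hinv

theorem abs_integral_tanh_sub_integral_le {ω Y c : ℝ} (hω : 0 ≤ ω) (hY : 0 < Y)
    (hc : 0 < c) :
    |(∫ ξ in (0:ℝ)..ω, tanh (√(ξ ^ 2 + Y) / c) / √(ξ ^ 2 + Y)) -
        ∫ ξ in (0:ℝ)..ω, 1 / √(ξ ^ 2 + Y)| ≤
      c ^ 2 / Y * ∫ ξ in (0:ℝ)..ω, 1 / √(ξ ^ 2 + Y) := by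
  have hsqrt_pos : ∀ ξ : ℝ, 0 < √(ξ ^ 2 + Y) := fun ξ => sqrt_pos.2 (by positivity)
  have hsqrt : Continuous fun ξ : ℝ => √(ξ ^ 2 + Y) := by fun_prop
  have hinv : IntervalIntegrable (fun ξ : ℝ => 1 / √(ξ ^ 2 + Y)) MeasureTheory.volume 0 ω :=
    (continuous_const.div hsqrt fun ξ => (hsqrt_pos ξ).ne').intervalIntegrable 0 ω
  have htanh : IntervalIntegrable (fun ξ : ℝ => tanh (√(ξ ^ 2 + Y) / c) / √(ξ ^ 2 + Y))
      MeasureTheory.volume 0 ω :=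
    ((continuous_tanh.comp (hsqrt.div_const c)).div hsqrt
      fun ξ => (hsqrt_pos ξ).ne').intervalIntegrable 0 ω
  rw [← intervalIntegral.integral_sub htanh hinv, ← intervalIntegral.integral_const_mul]
  refine (intervalIntegral.abs_integral_le_integral_abs hω).trans <|
    intervalIntegral.integral_mono_on hω (htanh.sub hinv).abs (hinv.const_mul _) fun ξ _ => ?_
  refine abs_tanh_div_div_sub_inv_le (hsqrt_pos ξ) hc hY ?_
  rw [sq_sqrt (by positivity)]
  nlinarith [sq_nonneg ξ]

theorem hasDerivWithinAt_zero_of_abs_sub_le_sq {f : ℝ → ℝ} {s : Set ℝ} {a C : ℝ}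
    (h : ∀ x ∈ s, |f x - f a| ≤ C * (x - a) ^ 2) : HasDerivWithinAt f 0 s a := by
  rw [hasDerivWithinAt_iff_isLittleO]
  simp only [smul_zero, sub_zero]
  refine Asymptotics.IsBigO.trans_isLittleO (g := fun x => ‖x - a‖ ^ 2) ?_
    ((Asymptotics.isLittleO_pow_sub_sub a one_lt_two).mono nhdsWithin_le_nhds)
  refine Asymptotics.IsBigO.of_bound C ?_
  filter_upwards [self_mem_nhdsWithin] with x hx
  simpa [Real.norm_eq_abs, sq_abs] using h x hx

theorem F_continuous_right_deriv_zero_at_T0 (kB ω Y₀ : ℝ)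
    (hkB : 0 < kB) (hω : 0 < ω) (hY₀ : 0 < Y₀)
    (F : ℝ → ℝ)
    (hFpos : ∀ T : ℝ, 0 < T → F T = ∫ ξ in (0:ℝ)..ω,
      Real.tanh (Real.sqrt (ξ^2 + Y₀) / (2 * kB * T)) / Real.sqrt (ξ^2 + Y₀))
    (hF0 : F 0 = ∫ ξ in (0:ℝ)..ω, 1 / Real.sqrt (ξ^2 + Y₀)) :
    ContinuousWithinAt F (Set.Ici 0) 0 ∧
    HasDerivWithinAt F 0 (Set.Ici 0) 0 ∧
    ∀ T : ℝ, 0 < T →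
      |F T - F 0| / T ≤ (4 * kB^2 * T / Y₀) * ∫ ξ in (0:ℝ)..ω, 1 / Real.sqrt (ξ^2 + Y₀) := by
  have hbound : ∀ T, 0 < T → |F T - F 0| ≤ 4 * kB ^ 2 / Y₀ * F 0 * T ^ 2 := fun T hT => by
    have h := abs_integral_tanh_sub_integral_le hω.le hY₀ (by positivity : 0 < 2 * kB * T)
    rw [← hFpos T hT, ← hF0] at h
    exact h.trans_eq (by ring)
  have hderiv : HasDerivWithinAt F 0 (Set.Ici 0) 0 := by
    refine hasDerivWithinAt_zero_of_abs_sub_le_sq (C := 4 * kB ^ 2 / Y₀ * F 0)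
      fun T hT => ?_
    rcases (Set.mem_Ici.1 hT).eq_or_lt with rfl | hT
    · simp
    · simpa using hbound T hT
  refine ⟨hderiv.continuousWithinAt, hderiv, fun T hT => ?_⟩
  rw [div_le_iff₀ hT, ← hF0]
  exact (hbound T hT).trans_eq (by ring)
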